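/- arXiv:1411.7851 — 2 statements merged into one kernel-verified Lean document; each statement's English description precedes it below -/
import Mathlib

section
/- Let I = (I_1, ..., I_r) be a composition of N = |I| with r ≥ 2, and let 1 ≤ a ≤ r-1. Set S = I_1 + ... + I_a. Then -(I_a + I_{a+1}) m_I = [ C(N-1, S-1)^2 (N-S) + C(N-1, (N-S)-1)^2 S ] · m_{(I_1,...,I_a)} · m_{(I_{a+1},...,I_r)}, where C denotes the binomial coefficient. -/
/-!
Cutting `I` after its `a`-th part, the sign, the factor products and the bond products of `m_I`
split into those of the two pieces, except for the single bond `1/(I_a + I_{a+1})` across the cut.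
What remains is the ratio `N!(N-1)! / (S!(S-1)! T!(T-1)!)` with `T = N - S`, and since
`C(N-1, S-1) (S-1)! T! = (N-1)!`, the two binomial terms times `S!(S-1)! T!(T-1)!` are
`S (N-1)!²` and `T (N-1)!²`, which add up to `N!(N-1)!`.
-/

/-- The multiplicity `m_I` associated to a composition `I = (I_1, …, I_r)`. -/
noncomputable def mcoef (I : List ℕ) : ℚ :=
  -(-1 : ℚ) ^ I.length * (Nat.factorial I.sum) * (Nat.factorial (I.sum - 1))
    * (I.map (fun k => (1 : ℚ) / ((Nat.factorial k : ℚ) * (Nat.factorial (k - 1) : ℚ)))).prod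
    * ((I.zip I.tail).map (fun p => (1 : ℚ) / ((p.1 : ℚ) + (p.2 : ℚ)))).prod

open scoped Nat

theorem List.zip_tail_append {α : Type*} {l₁ l₂ : List α} (h₁ : l₁ ≠ []) (h₂ : l₂ ≠ []) :
    (l₁ ++ l₂).zip (l₁ ++ l₂).tail
      = l₁.zip l₁.tail ++ (l₁.getLast h₁, l₂.head h₂) :: l₂.zip l₂.tail := by
  obtain ⟨y, l₂, rfl⟩ := List.exists_cons_of_ne_nil h₂
  induction l₁ with
  | nil => exact absurd rfl h₁
  | cons x l₁ ih =>
    cases l₁ with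
    | nil => simp
    | cons z l₁ => simpa using ih (List.cons_ne_nil _ _)

theorem Nat.factorial_add_mul_factorial_add_sub_one {S T : ℕ} (hS : 0 < S) (hT : 0 < T) :
    (S + T)! * (S + T - 1)!
      = ((S + T - 1).choose (S - 1) ^ 2 * T + (S + T - 1).choose (T - 1) ^ 2 * S)
        * (S ! * (S - 1)!) * (T ! * (T - 1)!) := by
  obtain ⟨s, rfl⟩ := Nat.exists_eq_add_one_of_ne_zero hS.ne'
  obtain ⟨t, rfl⟩ := Nat.exists_eq_add_one_of_ne_zero hT.ne'
  set n := s + t + 1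
  have hn : s + 1 + (t + 1) = n + 1 := by omega
  have hs : (n.choose s) * s ! * (t + 1)! = n ! := by
    rw [← Nat.choose_mul_factorial_mul_factorial (by omega : s ≤ n), show n - s = t + 1 by omega]
  have ht : (n.choose t) * t ! * (s + 1)! = n ! := by
    rw [← Nat.choose_mul_factorial_mul_factorial (by omega : t ≤ n), show n - t = s + 1 by omega]
  simp only [hn, Nat.add_sub_cancel]
  calc (n + 1)! * n ! = n ! ^ 2 * (s + 1) + n ! ^ 2 * (t + 1) := by
        rw [Nat.factorial_succ, ← hn]; ring
    _ = (n.choose s * s ! * (t + 1)!) ^ 2 * (s + 1) + (n.choose t * t ! * (s + 1)!) ^ 2 * (t + 1) := by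
        rw [hs, ht]
    _ = _ := by simp only [Nat.factorial_succ]; ring

theorem mcoef_append {J K : List ℕ} (hJ : J ≠ []) (hK : K ≠ [])
    (hJK : J.getLast hJ + K.head hK ≠ 0) :
    -((J.getLast hJ : ℚ) + K.head hK) * mcoef (J ++ K)
        * (((J.sum)! * (J.sum - 1)! * ((K.sum)! * (K.sum - 1)!) : ℕ) : ℚ)
      = (((J.sum + K.sum)! * (J.sum + K.sum - 1)! : ℕ) : ℚ) * mcoef J * mcoef K := by
  have hJK' : (J.getLast hJ : ℚ) + K.head hK ≠ 0 := by exact_mod_cast hJK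
  simp only [mcoef, List.zip_tail_append hJ hK, List.map_append, List.map_cons, List.prod_append,
    List.prod_cons, List.length_append, List.sum_append, pow_add, Nat.cast_mul]
  field_simp

theorem stmt_2_general (r : ℕ) (I : List ℕ) (hlen : I.length = r)
    (hpos : ∀ x ∈ I, 0 < x) (a : ℕ) (ha1 : 1 ≤ a) (ha2 : a ≤ r - 1) :
    let N := I.sum;
    let S := (I.take a).sum;
    -((I.getD (a - 1) 0 : ℚ) + (I.getD a 0 : ℚ)) * mcoef I
      = (((Nat.choose (N - 1) (S - 1) : ℚ)) ^ 2 * ((N : ℚ) - (S : ℚ))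
          + ((Nat.choose (N - 1) ((N - S) - 1) : ℚ)) ^ 2 * (S : ℚ))
        * mcoef (I.take a) * mcoef (I.drop a) := by
  intro N S
  have har : a < I.length := by rw [hlen]; omega
  have hJ : I.take a ≠ [] := List.ne_nil_of_length_pos (by simp; omega)
  have hK : I.drop a ≠ [] := List.ne_nil_of_length_pos (by simp; omega)
  have hx : I.getD (a - 1) 0 = (I.take a).getLast hJ := by
    rw [List.getD_eq_getElem _ _ (by omega), List.getLast_eq_getElem]
    simp [har.le]
  have hy : I.getD a 0 = (I.drop a).head hK := by
    rw [List.getD_eq_getElem _ _ har, List.head_drop]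
  set T := (I.drop a).sum
  have hN : N = S + T := (List.sum_take_add_sum_drop I a).symm
  have hx0 : 0 < (I.take a).getLast hJ := hpos _ (List.mem_of_mem_take (List.getLast_mem hJ))
  have hy0 : 0 < (I.drop a).head hK := hpos _ (List.mem_of_mem_drop (List.head_mem hK))
  have hS : 0 < S := hx0.trans_le (List.le_sum_of_mem (List.getLast_mem hJ))
  have hT : 0 < T := hy0.trans_le (List.le_sum_of_mem (List.head_mem hK))
  have hF : ((S ! * (S - 1)! * (T ! * (T - 1)!) : ℕ) : ℚ) ≠ 0 := by positivity
  have key := mcoef_append hJ hK (by omega)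
  rw [List.take_append_drop, Nat.factorial_add_mul_factorial_add_sub_one hS hT] at key
  rw [hx, hy, hN, Nat.add_sub_cancel_left]
  apply mul_right_cancel₀ hF
  rw [key]
  push_cast
  ring

theorem stmt_2 (r : ℕ) (hr : 2 ≤ r) (I : List ℕ) (hlen : I.length = r)
    (hpos : ∀ x ∈ I, 0 < x) (a : ℕ) (ha1 : 1 ≤ a) (ha2 : a ≤ r - 1) :
    let N := I.sum;
    let S := (I.take a).sum;
    -((I.getD (a - 1) 0 : ℚ) + (I.getD a 0 : ℚ)) * mcoef I
      = (((Nat.choose (N - 1) (S - 1) : ℚ)) ^ 2 * ((N : ℚ) - (S : ℚ))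
          + ((Nat.choose (N - 1) ((N - S) - 1) : ℚ)) ^ 2 * (S : ℚ))
        * mcoef (I.take a) * mcoef (I.drop a) :=
  stmt_2_general r I hlen hpos a ha1 ha2
end

section
/- Let I = (I_1, ..., I_r) be a composition of N = |I| with r ≥ 2. Then -(N - I_r) m_I = Σ_{a=1}^{r-1} C(N-1, S_a - 1)^2 (N - S_a) m_{(I_1,...,I_a)} m_{(I_{a+1},...,I_r)}, where S_a = I_1 + ... + I_a and C denotes the binomial coefficient. -/
open scoped Nat

theorem List.zip_tail_append_s3 {α : Type*} {A B : List α} (hA : A ≠ []) (hB : B ≠ []) :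
    (A ++ B).zip (A ++ B).tail = A.zip A.tail ++ (A.getLast hA, B.head hB) :: B.zip B.tail := by
  induction A with
  | nil => contradiction
  | cons x t ih =>
    cases t with
    | nil =>
      cases B with
      | nil => contradiction
      | cons b bs => rfl
    | cons y s =>
      have := ih (List.cons_ne_nil y s)
      simp only [List.cons_append, List.tail_cons, List.zip_cons_cons] at this ⊢
      rw [this, List.getLast_cons (List.cons_ne_nil y s)]

theorem List.sum_take_add_getLast_add_head {M : Type*} [AddMonoid M] {l : List M} {a : ℕ}
    (hA : l.take a ≠ []) (hB : l.drop a ≠ []) :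
    (l.take (a - 1)).sum + ((l.take a).getLast hA + (l.drop a).head hB) = (l.take (a + 1)).sum := by
  have ha : 0 < a := by simp at hA; omega
  have hlt : a < l.length := by simpa using hB
  rw [List.getLast_take, List.head_drop, List.getElem?_eq_getElem (by omega), Option.getD_some,
    ← add_assoc, ← List.sum_take_succ, Nat.sub_add_cancel ha, ← List.sum_take_succ]

noncomputable def factorialWeight (I : List ℕ) : ℚ :=
  (I.map fun k => (1 : ℚ) / ((k ! : ℚ) * ((k - 1)! : ℚ))).prod

noncomputable def adjacentWeight (I : List ℕ) : ℚ :=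
  ((I.zip I.tail).map fun p => (1 : ℚ) / ((p.1 : ℚ) + (p.2 : ℚ))).prod

theorem mcoef_eq (I : List ℕ) :
    mcoef I = -(-1) ^ I.length * (I.sum ! : ℚ) * ((I.sum - 1)! : ℚ)
      * factorialWeight I * adjacentWeight I := rfl

theorem factorialWeight_append (A B : List ℕ) :
    factorialWeight (A ++ B) = factorialWeight A * factorialWeight B := by
  simp [factorialWeight]

theorem adjacentWeight_append {A B : List ℕ} (hA : A ≠ []) (hB : B ≠ []) :
    adjacentWeight (A ++ B)
      = adjacentWeight A * adjacentWeight B / (A.getLast hA + B.head hB : ℚ) := by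
  simp only [adjacentWeight, List.zip_tail_append_s3 hA hB, List.map_append, List.map_cons,
    List.prod_append, List.prod_cons]
  ring

theorem choose_sq_mul_mcoef_mul_mcoef {A B : List ℕ} (hA : A ≠ []) (hB : B ≠ [])
    (hpos : ∀ x ∈ A ++ B, 0 < x) :
    ((A ++ B).sum - 1).choose (A.sum - 1) ^ 2 * ((A ++ B).sum - A.sum : ℚ) * mcoef A * mcoef B
      = -(A.sum * (A.getLast hA + B.head hB) / (A ++ B).sum) * mcoef (A ++ B) := by
  have hS : 0 < A.sum := List.sum_pos A (fun x hx => hpos x (List.mem_append_left B hx)) hA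
  have hT : 0 < B.sum := List.sum_pos B (fun x hx => hpos x (List.mem_append_right A hx)) hB
  have hjoin : 0 < A.getLast hA + B.head hB :=
    Nat.add_pos_left (hpos _ (List.mem_append_left B (List.getLast_mem hA))) _
  have hchoose : (((A.sum + B.sum - 1).choose (A.sum - 1) : ℕ) : ℚ)
      = (A.sum + B.sum - 1)! / ((A.sum - 1)! * B.sum !) := by
    rw [Nat.cast_choose ℚ (by omega), show A.sum + B.sum - 1 - (A.sum - 1) = B.sum by omega]
  have hfac : ∀ n, 0 < n → (n ! : ℚ) = n * (n - 1)! := fun n hn => by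
    rw [← Nat.cast_mul, Nat.mul_factorial_pred hn.ne']
  rw [mcoef_eq A, mcoef_eq B, mcoef_eq (A ++ B), factorialWeight_append,
    adjacentWeight_append hA hB, List.sum_append, List.length_append, hchoose,
    hfac _ hS, hfac _ hT, hfac _ (by omega : 0 < A.sum + B.sum)]
  generalize A.sum = S at hS ⊢
  generalize B.sum = T at hT ⊢
  generalize A.getLast hA = l at hjoin ⊢
  generalize B.head hB = h at hjoin ⊢
  have : (l + h : ℚ) ≠ 0 := by exact_mod_cast hjoin.ne'
  push_cast [Nat.one_le_iff_ne_zero.mpr hS.ne', Nat.one_le_iff_ne_zero.mpr hT.ne', pow_add]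
  field_simp
  ring

/-- `S_k = I_1 + ⋯ + I_k`, so `S_0 = 0`. -/
def partialSum (I : List ℕ) (k : ℕ) : ℚ := (I.take k).sum

theorem choose_sq_mul_mcoef_take_mul_mcoef_drop {I : List ℕ} (hpos : ∀ x ∈ I, 0 < x) {a : ℕ}
    (ha : 0 < a) (haI : a < I.length) :
    ((I.sum - 1).choose ((I.take a).sum - 1) : ℚ) ^ 2 * ((I.sum : ℚ) - (I.take a).sum)
        * mcoef (I.take a) * mcoef (I.drop a)
      = -(mcoef I / I.sum) * (partialSum I a * partialSum I (a + 1)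
          - partialSum I (a - 1) * partialSum I a) := by
  have hA : I.take a ≠ [] := List.ne_nil_of_length_pos (by simp; omega)
  have hB : I.drop a ≠ [] := by simpa using haI
  have hsplit := choose_sq_mul_mcoef_mul_mcoef hA hB (by rwa [List.take_append_drop])
  rw [List.take_append_drop] at hsplit
  rw [hsplit, partialSum, partialSum, partialSum, ← List.sum_take_add_getLast_add_head hA hB]
  push_cast
  ring

theorem stmt_3 (r : ℕ) (hr : 2 ≤ r) (I : List ℕ) (hlen : I.length = r)
    (hpos : ∀ x ∈ I, 0 < x) :
    let N := I.sum;
    -(((N : ℚ)) - (I.getD (r - 1) 0 : ℚ)) * mcoef I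
      = ∑ a ∈ Finset.Icc 1 (r - 1),
          ((Nat.choose (N - 1) ((I.take a).sum - 1) : ℚ)) ^ 2
            * ((N : ℚ) - ((I.take a).sum : ℚ))
            * mcoef (I.take a) * mcoef (I.drop a) := by
  intro N
  have hN : (N : ℚ) ≠ 0 := by
    have : I ≠ [] := by rintro rfl; simp at hlen; omega
    exact_mod_cast (List.sum_pos I hpos this).ne'
  have hfull : partialSum I r = N := by simp [partialSum, N, ← hlen]
  have hlast : partialSum I (r - 1) = N - I.getD (r - 1) 0 := by
    have := List.sum_take_succ I (r - 1) (by omega)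
    rw [show r - 1 + 1 = I.length by omega, List.take_length] at this
    rw [List.getD_eq_getElem _ _ (by omega), show N = I.sum from rfl, this, partialSum]
    push_cast
    ring
  calc -((N : ℚ) - I.getD (r - 1) 0) * mcoef I
      = -(mcoef I / N) * (partialSum I (r - 1) * partialSum I r
          - partialSum I 0 * partialSum I 1) := by
        rw [hfull, hlast, partialSum, List.take_zero, List.sum_nil, Nat.cast_zero, zero_mul,
          sub_zero]
        field_simp
    _ = -(mcoef I / N) * ∑ a ∈ Finset.Icc 1 (r - 1), (partialSum I (a + 1 - 1)
          * partialSum I (a + 1) - partialSum I (a - 1) * partialSum I a) := by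
        rw [Finset.sum_Icc_sub (by omega) fun k => partialSum I (k - 1) * partialSum I k,
          Nat.sub_add_cancel (by omega : 1 ≤ r)]
    _ = _ := by
        rw [Finset.mul_sum]
        refine Finset.sum_congr rfl fun a ha => ?_
        obtain ⟨ha, har⟩ := Finset.mem_Icc.mp ha
        rw [Nat.add_sub_cancel, choose_sq_mul_mcoef_take_mul_mcoef_drop hpos ha (by omega)]
end
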